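/- Let k > 0 and let α, β, β', γ, γ' be complex numbers with Re(γ) > Re(β) > 0 and Re(γ') > Re(β') > 0. If |x| + |y| < 1/k and |x/(1−ky)| + |y/(1−ky)| < 1/k, then F_{2,k}(α,β,β';γ,γ';x,y) = (1−ky)^{−α/k} F_{2,k}(α, β, γ'−β'; γ, γ'; x/(1−ky), −y/(1−ky)). -/

import Mathlib

open MeasureTheory Complex

/-- Pochhammer k-symbol: (x)_{n,k} = x(x+k)...(x+(n-1)k). -/
noncomputable def kPoch (k : ℝ) (x : ℂ) (n : ℕ) : ℂ :=
  ∏ i ∈ Finset.range n, (x + (i : ℂ) * (k : ℂ))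

/-- k-hypergeometric function ₂F₁ₖ[a, b; c; x]. -/
noncomputable def hyp2F1k (k : ℝ) (a b c x : ℂ) : ℂ :=
  ∑' n : ℕ, kPoch k a n * kPoch k b n / kPoch k c n * x ^ n / (n.factorial : ℂ)

/-- First Appell k-function F_{1,k}(a, b, b'; c; x, y). -/
noncomputable def F1k (k : ℝ) (a b b' c x y : ℂ) : ℂ :=
  ∑' p : ℕ × ℕ,
    kPoch k a (p.1 + p.2) * kPoch k b p.1 * kPoch k b' p.2 / kPoch k c (p.1 + p.2)
      * x ^ p.1 * y ^ p.2 / ((p.1.factorial : ℂ) * (p.2.factorial : ℂ))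

/-- Second Appell k-function F_{2,k}(a, b, b'; c, c'; x, y). -/
noncomputable def F2k (k : ℝ) (a b b' c c' x y : ℂ) : ℂ :=
  ∑' p : ℕ × ℕ,
    kPoch k a (p.1 + p.2) * kPoch k b p.1 * kPoch k b' p.2
      / (kPoch k c p.1 * kPoch k c' p.2)
      * x ^ p.1 * y ^ p.2 / ((p.1.factorial : ℂ) * (p.2.factorial : ℂ))

/-- Third Appell k-function F_{3,k}(a, a', b, b'; c; x, y). -/
noncomputable def F3k (k : ℝ) (a a' b b' c x y : ℂ) : ℂ :=
  ∑' p : ℕ × ℕ,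
    kPoch k a p.1 * kPoch k a' p.2 * kPoch k b p.1 * kPoch k b' p.2
      / kPoch k c (p.1 + p.2)
      * x ^ p.1 * y ^ p.2 / ((p.1.factorial : ℂ) * (p.2.factorial : ℂ))

/-- k-Gamma function Γ_k(x) = ∫₀^∞ t^{x-1} e^{-t^k/k} dt. -/
noncomputable def kGammaF (k : ℝ) (x : ℂ) : ℂ :=
  ∫ t in Set.Ioi (0 : ℝ), (t : ℂ) ^ (x - 1) * Complex.exp (-((t ^ k : ℝ) : ℂ) / (k : ℂ))

/-- k-Beta function B_k(x, y) = (1/k) ∫₀¹ t^{x/k-1} (1-t)^{y/k-1} dt. -/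
noncomputable def kBetaF (k : ℝ) (x y : ℂ) : ℂ :=
  (1 / (k : ℂ)) * ∫ t in (0:ℝ)..1, (t : ℂ) ^ (x / (k : ℂ) - 1) * ((1 : ℂ) - (t : ℂ)) ^ (y / (k : ℂ) - 1)

/-!
Expanding in powers of `x`,
`F_{2,k}(α, β, β'; γ, γ'; x, y) = ∑ₘ (α)_{m,k} (β)_{m,k} / ((γ)_{m,k} m!) xᵐ ₂F₁,ₖ(α + mk, β'; γ'; y)`,
so it suffices to apply Pfaff's transformation
`₂F₁,ₖ(a, b; c; y) = (1 - ky)^(-a/k) ₂F₁,ₖ(a, c - b; c; -y/(1 - ky))` to every coefficient: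
the extra factor `(1 - ky)^(-m)` turns `xᵐ` into `(x/(1 - ky))ᵐ`. Pfaff's transformation is the
reflection `t ↦ 1 - t` in Euler's integral
`∫₀¹ t^(b/k-1) (1-t)^((c-b)/k-1) (1 - kyt)^(-a/k) dt = B(b/k, (c-b)/k) ₂F₁,ₖ(a, b; c; y)`,
which is computed termwise from the binomial series of `(1 - kyt)^(-a/k)`.
-/

lemma kPoch_succ (k : ℝ) (x : ℂ) (n : ℕ) :
    kPoch k x (n + 1) = kPoch k x n * (x + n * k) :=
  Finset.prod_range_succ _ _

lemma kPoch_add (k : ℝ) (x : ℂ) (m n : ℕ) :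
    kPoch k x (m + n) = kPoch k x m * kPoch k (x + m * k) n := by
  simp only [kPoch, Finset.prod_range_add, Nat.cast_add, add_mul, add_assoc]

lemma kPoch_eq_pow_mul_kPoch_one {k : ℝ} (hk : k ≠ 0) (x : ℂ) (n : ℕ) :
    kPoch k x n = (k : ℂ) ^ n * kPoch 1 (x / k) n := by
  have hk' : (k : ℂ) ≠ 0 := by exact_mod_cast hk
  induction n with
  | zero => simp [kPoch]
  | succ n ih =>
    rw [kPoch_succ, kPoch_succ, ih, pow_succ]
    field_simp
    push_cast
    ring

lemma kPoch_one_eq_ascPochhammer_eval (s : ℂ) (n : ℕ) :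
    kPoch 1 s n = (ascPochhammer ℂ n).eval s := by
  induction n with
  | zero => simp [kPoch]
  | succ n ih => rw [kPoch_succ, ih, ascPochhammer_succ_eval]; simp

lemma kPoch_one_eq_factorial_mul_choose (s : ℂ) (n : ℕ) :
    kPoch 1 s n = n.factorial * Ring.choose (s + n - 1) n := by
  rw [← Ring.multichoose_eq, ← nsmul_eq_mul, Ring.factorial_nsmul_multichoose_eq_ascPochhammer,
    Polynomial.ascPochhammer_smeval_eq_eval, kPoch_one_eq_ascPochhammer_eval]

lemma kPoch_ne_zero {k : ℝ} (hk : 0 ≤ k) {x : ℂ} (hx : 0 < x.re) (n : ℕ) : kPoch k x n ≠ 0 :=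
  Finset.prod_ne_zero_iff.2 fun i _ h ↦ by
    have := congrArg Complex.re h
    simp only [Complex.add_re, Complex.mul_re, Complex.natCast_re, Complex.ofReal_re,
      Complex.natCast_im, Complex.ofReal_im, mul_zero, sub_zero, Complex.zero_re] at this
    nlinarith [(Nat.cast_nonneg i : (0 : ℝ) ≤ i)]

theorem hasSum_kPoch_mul_pow_div_factorial {k : ℝ} (hk : k ≠ 0) (a : ℂ) {w : ℂ}
    (hw : ‖(k : ℂ) * w‖ < 1) :
    HasSum (fun n ↦ kPoch k a n * w ^ n / n.factorial) ((1 - k * w) ^ (-(a / k))) := by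
  have hfac : ∀ n : ℕ, (n.factorial : ℂ) ≠ 0 := fun n ↦ by exact_mod_cast n.factorial_ne_zero
  have := (Complex.one_div_one_sub_cpow_hasFPowerSeriesOnBall_zero (a / k)).hasSum
    (y := k * w) (by rw [← ENNReal.ofReal_one, Metric.eball_ofReal]; simpa using hw)
  simp only [FormalMultilinearSeries.ofScalars_apply_eq, zero_add, smul_eq_mul] at this
  rw [Complex.cpow_neg, ← one_div]
  refine this.congr_fun fun n ↦ ?_
  rw [kPoch_eq_pow_mul_kPoch_one hk, kPoch_one_eq_factorial_mul_choose, mul_pow]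
  field_simp [hfac n]

lemma norm_kPoch_le {k : ℝ} (hk : 0 < k) (a : ℂ) (n : ℕ) :
    ‖kPoch k a n‖ ≤ ((n : ℝ) + 1) ^ ⌈‖a‖ / k⌉₊ * n.factorial * k ^ n := by
  set A := ⌈‖a‖ / k⌉₊
  have ha : ‖a‖ ≤ A * k := (div_le_iff₀ hk).1 (Nat.le_ceil _)
  induction n with
  | zero => simp [kPoch]
  | succ n ih =>
    have hn : (0 : ℝ) < n + 1 := by positivity
    have bernoulli : ((n : ℝ) + 1) ^ A * (n + 1 + A) ≤ ((n : ℝ) + 2) ^ A * (n + 1) := by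
      have h := one_add_mul_le_pow (a := 1 / ((n : ℝ) + 1)) (by linarith [one_div_pos.2 hn]) A
      rw [show 1 + 1 / ((n : ℝ) + 1) = (n + 2) / (n + 1) by field_simp; ring, div_pow,
        le_div_iff₀ (by positivity)] at h
      calc ((n : ℝ) + 1) ^ A * (n + 1 + A) = (1 + A * (1 / (n + 1))) * (n + 1) ^ A * (n + 1) := by
            field_simp
        _ ≤ _ := by gcongr
    have hfac : ‖a + n * k‖ ≤ (A + n) * k := by
      refine (norm_add_le _ _).trans ?_
      rw [norm_mul, Complex.norm_natCast, Complex.norm_real, Real.norm_of_nonneg hk.le]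
      linarith
    rw [kPoch_succ, norm_mul, Nat.factorial_succ, pow_succ]
    push_cast
    calc ‖kPoch k a n‖ * ‖a + n * k‖
        ≤ ((n : ℝ) + 1) ^ A * n.factorial * k ^ n * ((A + n) * k) := by gcongr
      _ ≤ ((n : ℝ) + 1) ^ A * (n + 1 + A) * n.factorial * k ^ n * k := by
        have : (0 : ℝ) ≤ (n + 1) ^ A * n.factorial * k ^ n * k := by positivity
        nlinarith
      _ ≤ ((n : ℝ) + 2) ^ A * (n + 1) * n.factorial * k ^ n * k := by gcongr
      _ = _ := by ring

lemma re_mul_le_norm_kPoch {k : ℝ} (hk : 0 ≤ k) {c : ℂ} (hc : 0 < c.re) (n : ℕ) :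
    c.re * (k ^ n * n.factorial) ≤ (c.re + n * k) * ‖kPoch k c n‖ := by
  induction n with
  | zero => simp [kPoch]
  | succ n ih =>
    have hre : c.re + n * k ≤ ‖c + n * k‖ := by
      simpa using Complex.re_le_norm (c + n * k)
    rw [kPoch_succ, norm_mul, Nat.factorial_succ, pow_succ]
    push_cast
    have h0 : 0 ≤ ‖kPoch k c n‖ := norm_nonneg _
    have h1 : 0 ≤ c.re + n * k := by positivity
    calc c.re * (k ^ n * k * ((n + 1) * n.factorial))
        = (k * (n + 1)) * (c.re * (k ^ n * n.factorial)) := by ring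
      _ ≤ (c.re + (n + 1) * k) * ((c.re + n * k) * ‖kPoch k c n‖) := by
        gcongr
        linarith
      _ ≤ (c.re + (n + 1) * k) * (‖kPoch k c n‖ * ‖c + n * k‖) := by
        rw [mul_comm (c.re + n * k)]
        gcongr

lemma norm_kPoch_div_kPoch_le {k : ℝ} (hk : 0 < k) (b : ℂ) {c : ℂ} (hc : 0 < c.re) (n : ℕ) :
    ‖kPoch k b n / kPoch k c n‖ ≤ (1 + k / c.re) * ((n : ℝ) + 1) ^ (⌈‖b‖ / k⌉₊ + 1) := by
  have hc' : 0 < ‖kPoch k c n‖ := norm_pos_iff.2 (kPoch_ne_zero hk.le hc n)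
  rw [norm_div, div_le_iff₀ hc', pow_succ]
  calc ‖kPoch k b n‖ ≤ ((n : ℝ) + 1) ^ ⌈‖b‖ / k⌉₊ * (k ^ n * n.factorial) := by
        simpa only [mul_assoc, mul_comm (n.factorial : ℝ)] using norm_kPoch_le hk b n
    _ ≤ ((n : ℝ) + 1) ^ ⌈‖b‖ / k⌉₊ * ((c.re + n * k) / c.re * ‖kPoch k c n‖) := by
        refine mul_le_mul_of_nonneg_left ?_ (by positivity)
        rw [div_mul_eq_mul_div, le_div_iff₀ hc, mul_comm]
        exact re_mul_le_norm_kPoch hk.le hc n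
    _ ≤ (1 + k / c.re) * (((n : ℝ) + 1) ^ ⌈‖b‖ / k⌉₊ * (n + 1)) * ‖kPoch k c n‖ := by
        have : (c.re + n * k) / c.re ≤ (1 + k / c.re) * (n + 1) := by
          rw [div_le_iff₀ hc]
          field_simp
          nlinarith [hk.le, hc.le, (Nat.cast_nonneg n : (0 : ℝ) ≤ n)]
        calc _ = ((n : ℝ) + 1) ^ ⌈‖b‖ / k⌉₊ * ‖kPoch k c n‖ * ((c.re + n * k) / c.re) := by ring
          _ ≤ ((n : ℝ) + 1) ^ ⌈‖b‖ / k⌉₊ * ‖kPoch k c n‖ * ((1 + k / c.re) * (n + 1)) := by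
            gcongr
          _ = _ := by ring

lemma summable_add_one_pow_mul_geometric (E : ℕ) {ρ : ℝ} (h0 : 0 ≤ ρ) (h1 : ρ < 1) :
    Summable fun n : ℕ ↦ ((n : ℝ) + 1) ^ E * ρ ^ n := by
  simp_rw [add_pow, one_pow, mul_one, Finset.sum_mul]
  refine summable_sum fun i _ ↦ ?_
  simpa only [mul_right_comm _ (E.choose i : ℝ)] using
    (summable_pow_mul_geometric_of_norm_lt_one i (by rwa [Real.norm_of_nonneg h0])).mul_right
      (E.choose i : ℝ)

lemma summable_prod_of_summable_sum_antidiagonal {f : ℕ × ℕ → ℝ} (hf : ∀ p, 0 ≤ f p)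
    (h : Summable fun N ↦ ∑ p ∈ Finset.HasAntidiagonal.antidiagonal N, f p) : Summable f := by
  rw [← Finset.HasAntidiagonal.sigmaAntidiagonalEquivProd.summable_iff]
  refine (summable_sigma_of_nonneg fun _ ↦ hf _).2 ⟨fun _ ↦ Summable.of_finite, ?_⟩
  simp only [← Finset.tsum_subtype] at h
  exact h

lemma summable_choose_mul_pow_mul_pow (E : ℕ) {r s : ℝ} (hr : 0 ≤ r) (hs : 0 ≤ s)
    (hrs : r + s < 1) :
    Summable fun p : ℕ × ℕ ↦
      ((p.1 + p.2 : ℕ) + 1 : ℝ) ^ E * (p.1 + p.2).choose p.1 * (r ^ p.1 * s ^ p.2) := by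
  refine summable_prod_of_summable_sum_antidiagonal (fun _ ↦ by positivity) ?_
  refine (summable_add_one_pow_mul_geometric E (by positivity) hrs).congr fun N ↦ ?_
  rw [(Commute.all r s).add_pow', Finset.mul_sum]
  refine (Finset.sum_congr rfl fun p hp ↦ ?_).symm
  rw [Finset.HasAntidiagonal.mem_antidiagonal.1 hp, nsmul_eq_mul, mul_assoc]

lemma summable_norm_kPoch_mul_pow_div_factorial {k : ℝ} (hk : 0 < k) (a : ℂ) {w : ℂ}
    (hw : ‖w‖ < 1 / k) :
    Summable fun n : ℕ ↦ ‖kPoch k a n * w ^ n / n.factorial‖ := by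
  refine .of_nonneg_of_le (fun _ ↦ norm_nonneg _) (fun n ↦ ?_)
    (summable_add_one_pow_mul_geometric ⌈‖a‖ / k⌉₊ (by positivity) ((lt_div_iff₀' hk).1 hw))
  rw [norm_div, norm_mul, norm_pow, Complex.norm_natCast, div_le_iff₀ (by positivity), mul_pow]
  calc ‖kPoch k a n‖ * ‖w‖ ^ n ≤ ((n : ℝ) + 1) ^ ⌈‖a‖ / k⌉₊ * n.factorial * k ^ n * ‖w‖ ^ n := by
        gcongr
        exact norm_kPoch_le hk a n
    _ = _ := by ring

noncomputable def F2kTerm (k : ℝ) (a b b' c c' x y : ℂ) (p : ℕ × ℕ) : ℂ :=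
  kPoch k a (p.1 + p.2) * kPoch k b p.1 * kPoch k b' p.2 / (kPoch k c p.1 * kPoch k c' p.2)
    * x ^ p.1 * y ^ p.2 / ((p.1.factorial : ℂ) * (p.2.factorial : ℂ))

lemma F2k_eq_tsum_F2kTerm (k : ℝ) (a b b' c c' x y : ℂ) :
    F2k k a b b' c c' x y = ∑' p, F2kTerm k a b b' c c' x y p := rfl

lemma norm_F2kTerm_le {k : ℝ} (hk : 0 < k) (a b b' : ℂ) {c c' : ℂ} (hc : 0 < c.re)
    (hc' : 0 < c'.re) (x y : ℂ) (m n : ℕ) :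
    ‖F2kTerm k a b b' c c' x y (m, n)‖ ≤ (1 + k / c.re) * (1 + k / c'.re) *
      (((m + n : ℕ) + 1 : ℝ) ^ (⌈‖a‖ / k⌉₊ + (⌈‖b‖ / k⌉₊ + 1) + (⌈‖b'‖ / k⌉₊ + 1))
        * (m + n).choose m * ((k * ‖x‖) ^ m * (k * ‖y‖) ^ n)) := by
  set N : ℝ := ((m + n : ℕ) : ℝ) + 1
  have ha := norm_kPoch_le hk a (m + n)
  have hb : ‖kPoch k b m / kPoch k c m‖ ≤ (1 + k / c.re) * N ^ (⌈‖b‖ / k⌉₊ + 1) := by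
    refine (norm_kPoch_div_kPoch_le hk b hc m).trans ?_
    gcongr
    simp [N]
  have hb' : ‖kPoch k b' n / kPoch k c' n‖ ≤ (1 + k / c'.re) * N ^ (⌈‖b'‖ / k⌉₊ + 1) := by
    refine (norm_kPoch_div_kPoch_le hk b' hc' n).trans ?_
    gcongr
    simp [N]
  have hterm : F2kTerm k a b b' c c' x y (m, n) = kPoch k a (m + n) * (kPoch k b m / kPoch k c m)
      * (kPoch k b' n / kPoch k c' n) * x ^ m * y ^ n / (m.factorial * n.factorial) := by
    simp only [F2kTerm]
    ring
  rw [hterm, norm_div, norm_mul, norm_mul, norm_mul, norm_mul, norm_pow, norm_pow, norm_mul,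
    Complex.norm_natCast, Complex.norm_natCast]
  calc _ ≤ (N ^ ⌈‖a‖ / k⌉₊ * (m + n).factorial * k ^ (m + n))
        * ((1 + k / c.re) * N ^ (⌈‖b‖ / k⌉₊ + 1)) * ((1 + k / c'.re) * N ^ (⌈‖b'‖ / k⌉₊ + 1))
        * ‖x‖ ^ m * ‖y‖ ^ n / (m.factorial * n.factorial) := by gcongr
    _ = _ := by
      rw [Nat.cast_add_choose]
      field_simp
      ring

theorem summable_F2kTerm {k : ℝ} (hk : 0 < k) (a b b' : ℂ) {c c' : ℂ} (hc : 0 < c.re)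
    (hc' : 0 < c'.re) {x y : ℂ} (hxy : ‖x‖ + ‖y‖ < 1 / k) :
    Summable (F2kTerm k a b b' c c' x y) := by
  have hr : k * ‖x‖ + k * ‖y‖ < 1 := by
    rw [← mul_add]
    exact (lt_div_iff₀' hk).1 hxy
  refine Summable.of_norm_bounded ?_ fun p ↦ norm_F2kTerm_le hk a b b' hc hc' x y p.1 p.2
  exact (summable_choose_mul_pow_mul_pow _ (by positivity) (by positivity) hr).mul_left _

lemma F2k_eq_tsum_hyp2F1k {k : ℝ} {a b b' c c' x y : ℂ}
    (hsum : Summable (F2kTerm k a b b' c c' x y)) :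
    F2k k a b b' c c' x y = ∑' m : ℕ, kPoch k a m * kPoch k b m / (kPoch k c m * m.factorial)
      * x ^ m * hyp2F1k k (a + m * k) b' c' y := by
  rw [F2k_eq_tsum_F2kTerm, hsum.tsum_prod' fun m ↦ hsum.prod_factor m]
  refine tsum_congr fun m ↦ ?_
  rw [hyp2F1k, ← tsum_mul_left]
  refine tsum_congr fun n ↦ ?_
  rw [F2kTerm, kPoch_add k a m n]
  ring

lemma Gamma_add_nat_eq_kPoch_one_mul {s : ℂ} (hs : 0 < s.re) (n : ℕ) :
    Complex.Gamma (s + n) = kPoch 1 s n * Complex.Gamma s := by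
  have hs' : ∀ m : ℕ, s ≠ -m := fun m h ↦ by
    have := congrArg Complex.re h
    simp only [Complex.neg_re, Complex.natCast_re] at this
    linarith [(Nat.cast_nonneg m : (0 : ℝ) ≤ m)]
  rw [kPoch_one_eq_ascPochhammer_eval, ← Complex.Gamma_add_nat_div_Gamma_eq s hs',
    div_mul_cancel₀ _ (Complex.Gamma_ne_zero_of_re_pos hs)]

lemma betaIntegral_add_nat_mul_kPoch_one {u v : ℂ} (hu : 0 < u.re) (hv : 0 < v.re) (n : ℕ) :
    Complex.betaIntegral (u + n) v * kPoch 1 (u + v) n = kPoch 1 u n * Complex.betaIntegral u v := by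
  have huv : 0 < (u + v).re := by rw [Complex.add_re]; positivity
  have hun : 0 < (u + n).re := by rw [Complex.add_re, Complex.natCast_re]; positivity
  rw [Complex.betaIntegral_eq_Gamma_mul_div _ _ hun hv, Complex.betaIntegral_eq_Gamma_mul_div _ _ hu hv,
    add_right_comm, Gamma_add_nat_eq_kPoch_one_mul hu, Gamma_add_nat_eq_kPoch_one_mul huv]
  have := kPoch_ne_zero zero_le_one huv n
  have := Complex.Gamma_ne_zero_of_re_pos huv
  field_simp

lemma betaIntegral_div_add_nat_mul_kPoch {k : ℝ} (hk : 0 < k) {b c : ℂ} (hb : 0 < b.re)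
    (hcb : b.re < c.re) (n : ℕ) :
    Complex.betaIntegral (b / k + n) ((c - b) / k) * kPoch k c n
      = kPoch k b n * Complex.betaIntegral (b / k) ((c - b) / k) := by
  have h := betaIntegral_add_nat_mul_kPoch_one (u := b / k) (v := (c - b) / k)
    (by simpa using div_pos hb hk) (by simpa using div_pos (sub_pos.2 hcb) hk) n
  rw [← add_div, add_sub_cancel] at h
  rw [kPoch_eq_pow_mul_kPoch_one hk.ne' c, kPoch_eq_pow_mul_kPoch_one hk.ne' b,
    mul_left_comm, h, mul_assoc]

lemma betaIntegral_ne_zero {u v : ℂ} (hu : 0 < u.re) (hv : 0 < v.re) :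
    Complex.betaIntegral u v ≠ 0 := by
  rw [Complex.betaIntegral_eq_Gamma_mul_div _ _ hu hv]
  exact div_ne_zero (mul_ne_zero (Complex.Gamma_ne_zero_of_re_pos hu)
    (Complex.Gamma_ne_zero_of_re_pos hv)) (Complex.Gamma_ne_zero_of_re_pos (by rw [Complex.add_re]; positivity))

theorem integral_eulerKernel_eq_betaIntegral_mul_hyp2F1k {k : ℝ} (hk : 0 < k) (a : ℂ) {b c : ℂ}
    (hb : 0 < b.re) (hcb : b.re < c.re) {w : ℂ} (hw : ‖w‖ < 1 / k) :
    ∫ t in (0 : ℝ)..1, (t : ℂ) ^ (b / k - 1) * (1 - (t : ℂ)) ^ ((c - b) / k - 1)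
        * (1 - k * w * t) ^ (-(a / k))
      = Complex.betaIntegral (b / k) ((c - b) / k) * hyp2F1k k a b c w := by
  set U := b / k
  set V := (c - b) / k
  have hU : 0 < U.re := by simpa [U] using div_pos hb hk
  have hV : 0 < V.re := by simpa [V] using div_pos (sub_pos.2 hcb) hk
  have hUn (n : ℕ) : 0 < (U + n).re := by rw [Complex.add_re, Complex.natCast_re]; positivity
  set coef : ℕ → ℂ := fun n ↦ kPoch k a n * w ^ n / n.factorial
  set B : ℂ → ℝ → ℂ := fun u t ↦ (t : ℂ) ^ (u - 1) * (1 - (t : ℂ)) ^ (V - 1)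
  set G : ℕ → ℝ → ℂ := fun n t ↦ coef n * B (U + n) t
  have hB_int {u : ℂ} (hu : 0 < u.re) : IntegrableOn (B u) (Set.Ioc 0 1) := by
    have := Complex.betaIntegral_convergent hu hV
    rwa [intervalIntegrable_iff, Set.uIoc_of_le zero_le_one] at this
  have hB_le (n : ℕ) {t : ℝ} (ht : t ∈ Set.Ioc (0 : ℝ) 1) : ‖B (U + n) t‖ ≤ ‖B U t‖ := by
    simp only [B, norm_mul, Complex.norm_cpow_eq_rpow_re_of_pos ht.1]
    refine mul_le_mul_of_nonneg_right (Real.rpow_le_rpow_of_exponent_ge ht.1 ht.2 ?_) (by positivity)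
    simp
  have hexpand : ∀ t ∈ Set.Ioc (0 : ℝ) 1,
      B U t * (1 - k * w * t) ^ (-(a / k)) = ∑' n, G n t := by
    intro t ht
    have ht0 : (t : ℂ) ≠ 0 := by exact_mod_cast ht.1.ne'
    have hwt : ‖(k : ℂ) * (w * t)‖ < 1 := by
      rw [norm_mul, norm_mul, Complex.norm_real, Complex.norm_real, Real.norm_of_nonneg hk.le,
        Real.norm_of_nonneg ht.1.le, ← lt_div_iff₀' hk]
      exact lt_of_le_of_lt (mul_le_of_le_one_right (norm_nonneg w) ht.2) hw
    rw [mul_assoc (k : ℂ), ← (hasSum_kPoch_mul_pow_div_factorial hk.ne' a hwt).tsum_eq,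
      ← tsum_mul_left]
    refine tsum_congr fun n ↦ ?_
    simp only [G, B, coef]
    rw [add_sub_right_comm, Complex.cpow_add _ _ ht0, Complex.cpow_natCast]
    ring
  have hG_int (n : ℕ) : ∫ t in Set.Ioc (0 : ℝ) 1, G n t
      = Complex.betaIntegral U V * (kPoch k a n * kPoch k b n / kPoch k c n * w ^ n / n.factorial) := by
    have hc := kPoch_ne_zero hk.le (hb.trans hcb) n
    have hshift := eq_div_of_mul_eq hc (betaIntegral_div_add_nat_mul_kPoch hk hb hcb n)
    rw [integral_const_mul, ← intervalIntegral.integral_of_le zero_le_one]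
    change coef n * Complex.betaIntegral (U + n) V = _
    rw [hshift]
    simp only [coef]
    ring
  have hG_sum : Summable fun n ↦ ∫ t in Set.Ioc (0 : ℝ) 1, ‖G n t‖ := by
    refine .of_nonneg_of_le (fun n ↦ integral_nonneg fun _ ↦ norm_nonneg _)
      (fun n ↦ ?_) ((summable_norm_kPoch_mul_pow_div_factorial hk a hw).mul_right
        (∫ t in Set.Ioc (0 : ℝ) 1, ‖B U t‖))
    simp only [G, norm_mul, integral_const_mul]
    refine mul_le_mul_of_nonneg_left ?_ (norm_nonneg _)
    exact setIntegral_mono_on (hB_int (hUn n)).norm (hB_int hU).norm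
      measurableSet_Ioc fun t ht ↦ hB_le n ht
  rw [intervalIntegral.integral_of_le zero_le_one,
    setIntegral_congr_fun measurableSet_Ioc hexpand,
    ← integral_tsum_of_summable_integral_norm (fun n ↦ (hB_int (hUn n)).const_mul _)
      hG_sum, tsum_congr hG_int, tsum_mul_left, hyp2F1k]

lemma mul_cpow_of_re_pos {u v : ℂ} (hu : 0 < u.re) (hv : 0 < v.re) (s : ℂ) :
    (u * v) ^ s = u ^ s * v ^ s := by
  have hu0 : u ≠ 0 := fun h ↦ by simp [h] at hu
  have hv0 : v ≠ 0 := fun h ↦ by simp [h] at hv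
  have hu' := abs_lt.1 (Complex.abs_arg_lt_pi_div_two_iff.2 (Or.inl hu))
  have hv' := abs_lt.1 (Complex.abs_arg_lt_pi_div_two_iff.2 (Or.inl hv))
  rw [Complex.cpow_def_of_ne_zero (mul_ne_zero hu0 hv0), Complex.cpow_def_of_ne_zero hu0,
    Complex.cpow_def_of_ne_zero hv0, Complex.log_mul hu0 hv0 ⟨by linarith, by linarith⟩, add_mul,
    Complex.exp_add]

lemma re_one_sub_mul_pos {k : ℝ} (hk : 0 < k) {w : ℂ} (hw : ‖w‖ < 1 / k) {t : ℝ}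
    (ht : t ∈ Set.Icc (0 : ℝ) 1) : 0 < (1 - k * w * t).re := by
  have hnorm : ‖(k : ℂ) * w * t‖ < 1 := by
    rw [norm_mul, norm_mul, Complex.norm_real, Complex.norm_real, Real.norm_of_nonneg hk.le,
      Real.norm_of_nonneg ht.1, mul_assoc, ← lt_div_iff₀' hk]
    exact lt_of_le_of_lt (mul_le_of_le_one_right (norm_nonneg w) ht.2) hw
  rw [Complex.sub_re, Complex.one_re]
  linarith [Complex.re_le_norm ((k : ℂ) * w * t)]

lemma integral_eulerKernel_comp_one_sub {k : ℝ} (hk : 0 < k) (a b c : ℂ) {y : ℂ}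
    (hy : ‖y‖ < 1 / k) (hv : ‖y / (1 - k * y)‖ < 1 / k) :
    ∫ t in (0 : ℝ)..1, (t : ℂ) ^ (b / k - 1) * (1 - (t : ℂ)) ^ ((c - b) / k - 1)
        * (1 - k * y * t) ^ (-(a / k))
      = (1 - k * y) ^ (-(a / k)) * ∫ t in (0 : ℝ)..1, (t : ℂ) ^ ((c - b) / k - 1)
        * (1 - (t : ℂ)) ^ (b / k - 1) * (1 - k * -(y / (1 - k * y)) * t) ^ (-(a / k)) := by
  set z := 1 - (k : ℂ) * y
  have hz : 0 < z.re := by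
    simpa [z] using re_one_sub_mul_pos hk hy (t := 1) ⟨zero_le_one, le_rfl⟩
  have hz0 : z ≠ 0 := fun h ↦ by simp [h] at hz
  have hreflect := intervalIntegral.integral_comp_sub_left (a := 0) (b := 1)
    (fun t : ℝ ↦ (t : ℂ) ^ (b / k - 1) * (1 - (t : ℂ)) ^ ((c - b) / k - 1)
      * (1 - k * y * t) ^ (-(a / k))) 1
  simp only [sub_zero, sub_self] at hreflect
  rw [← hreflect, ← intervalIntegral.integral_const_mul]
  refine intervalIntegral.integral_congr fun t ht ↦ ?_
  rw [Set.uIcc_of_le zero_le_one] at ht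
  have hfactor : 1 - k * y * ((1 - t : ℝ) : ℂ) = z * (1 - k * -(y / z) * t) := by
    simp only [z] at hz0 ⊢
    push_cast
    field_simp
    ring
  rw [hfactor, mul_cpow_of_re_pos hz (re_one_sub_mul_pos hk (by rwa [norm_neg]) ht)]
  push_cast
  ring_nf

theorem hyp2F1k_pfaff {k : ℝ} (hk : 0 < k) (a : ℂ) {b c : ℂ} (hb : 0 < b.re) (hcb : b.re < c.re)
    {y : ℂ} (hy : ‖y‖ < 1 / k) (hv : ‖y / (1 - k * y)‖ < 1 / k) :
    hyp2F1k k a b c y = (1 - k * y) ^ (-(a / k)) * hyp2F1k k a (c - b) c (-(y / (1 - k * y))) := by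
  have hE₁ := integral_eulerKernel_eq_betaIntegral_mul_hyp2F1k hk a hb hcb hy
  have hE₂ := integral_eulerKernel_eq_betaIntegral_mul_hyp2F1k hk a (b := c - b) (c := c)
    (by simpa using hcb) (by simpa using hb) (w := -(y / (1 - k * y))) (by rwa [norm_neg])
  rw [sub_sub_cancel, Complex.betaIntegral_symm] at hE₂
  have hB : Complex.betaIntegral (b / k) ((c - b) / k) ≠ 0 :=
    betaIntegral_ne_zero (by simpa using div_pos hb hk) (by simpa using div_pos (sub_pos.2 hcb) hk)
  have h := integral_eulerKernel_comp_one_sub hk a b c hy hv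
  rw [hE₁, hE₂] at h
  exact mul_left_cancel₀ hB (by rw [h]; ring)

theorem F2k_transformation2 (k : ℝ) (hk : 0 < k) (α β β' γ γ' x y : ℂ)
    (hβ : 0 < β.re) (hγβ : β.re < γ.re) (hβ' : 0 < β'.re) (hγβ' : β'.re < γ'.re)
    (hxy : ‖x‖ + ‖y‖ < 1 / k)
    (hxy' : ‖x / (1 - (k : ℂ) * y)‖ + ‖y / (1 - (k : ℂ) * y)‖ < 1 / k) :
    F2k k α β β' γ γ' x y =
      (1 - (k : ℂ) * y) ^ (-α / (k : ℂ)) *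
        F2k k α β (γ' - β') γ γ' (x / (1 - (k : ℂ) * y)) (-(y / (1 - (k : ℂ) * y))) := by
  have hy : ‖y‖ < 1 / k := hxy.trans_le' (le_add_of_nonneg_left (norm_nonneg x))
  have hk0 : (k : ℂ) ≠ 0 := by exact_mod_cast hk.ne'
  have hz : 1 - (k : ℂ) * y ≠ 0 := fun h ↦ by
    simpa [h] using re_one_sub_mul_pos hk hy (t := 1) ⟨zero_le_one, le_rfl⟩
  rw [F2k_eq_tsum_hyp2F1k (summable_F2kTerm hk α β β' (hβ.trans hγβ) (hβ'.trans hγβ') hxy),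
    F2k_eq_tsum_hyp2F1k (summable_F2kTerm hk α β (γ' - β') (hβ.trans hγβ) (hβ'.trans hγβ')
      (by rwa [norm_neg])), ← tsum_mul_left]
  refine tsum_congr fun m ↦ ?_
  have hpow : (1 - (k : ℂ) * y) ^ (-((α + m * k) / k))
      = (1 - (k : ℂ) * y) ^ (-α / k) * ((1 - (k : ℂ) * y) ^ m)⁻¹ := by
    rw [show -((α + m * k) / k) = -α / k + -(m : ℂ) by field_simp; ring,
      Complex.cpow_add _ _ hz, Complex.cpow_neg, Complex.cpow_natCast]
  rw [hyp2F1k_pfaff hk _ hβ' hγβ' hy (hxy'.trans_le' (le_add_of_nonneg_left (norm_nonneg _))),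
    hpow, div_pow]
  field_simp
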